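/- (Lemma 3.2.) For all r, s > 0 and β = 0 the kernel satisfies k₀(r,s) = (1/(4π²)) ∫₀¹ ∫₀^{2π} ∫₀^{2π} q r s · (r − q cos θ₁)(s − q cos θ₂) / ( q² + r² − 2qr cos θ₁ + q² + s² − 2qs cos θ₂ ) dθ₁ dθ₂ dq. -/

import Mathlib

open MeasureTheory Real

noncomputable section

/-- The modified Bessel function of order 0: `I₀(a) = (1/2π) ∫₀^{2π} e^{a cos θ} dθ`. -/
def besselI0 (a : ℝ) : ℝ :=
  (1 / (2 * π)) * ∫ θ in (0:ℝ)..(2 * π), Real.exp (a * Real.cos θ)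

/-- The modified Bessel function of order 1: `I₁(a) = (1/2π) ∫₀^{2π} e^{a cos θ} cos θ dθ`. -/
def besselI1 (a : ℝ) : ℝ :=
  (1 / (2 * π)) * ∫ θ in (0:ℝ)..(2 * π), Real.exp (a * Real.cos θ) * Real.cos θ

/-- The sensitivity kernel
`k_β(r,s) = ∫₀¹ q ∫_β^∞ e^{−ρ(2q²+r²+s²)} (r I₀(2qrρ) − q I₁(2qrρ)) (s I₀(2qsρ) − q I₁(2qsρ)) r s dρ dq`. -/
def ker (β r s : ℝ) : ℝ :=
  ∫ q in (0:ℝ)..1, q * ∫ ρ in Set.Ioi β,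
    Real.exp (-(ρ * (2 * q ^ 2 + r ^ 2 + s ^ 2))) *
      (r * besselI0 (2 * q * r * ρ) - q * besselI1 (2 * q * r * ρ)) *
      (s * besselI0 (2 * q * s * ρ) - q * besselI1 (2 * q * s * ρ)) * r * s

end

/-!
Writing `r I₀(a) − q I₁(a) = (1/2π) ∫ (r − q cos θ) e^{a cos θ} dθ`, the product of the two
Bessel factors with `e^{−ρ(2q² + r² + s²)}` becomes a double integral over the torus of
`(r − q cos θ₁)(s − q cos θ₂) e^{−ρ D}`, where `D = |q e^{iθ₁} − r|² + |q e^{iθ₂} − s|²`.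
For `q ≠ r` the denominator `D` is bounded below by `(q − r)² > 0`, so Fubini lets us do the
`ρ`-integral first, and `∫₀^∞ e^{−ρD} dρ = 1/D`. The excluded values of `q` form a null set.
-/

open Set

lemma integral_Ioi_exp_neg_mul {b : ℝ} (hb : 0 < b) :
    ∫ ρ in Ioi (0:ℝ), exp (-(ρ * b)) = 1 / b := by
  have h := integral_exp_mul_Ioi (neg_neg_iff_pos.mpr hb) 0
  simp only [mul_zero, exp_zero] at h
  simp_rw [← mul_neg, mul_comm _ (-b), h]
  field_simp

/-- The lower bound `δ` on `D` dominates the integrand by `C e^{-δρ}`, which justifies Fubini. -/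
theorem integral_Ioi_integral_mul_exp_neg_mul {α : Type*} [MeasurableSpace α] {μ : Measure α}
    [IsFiniteMeasure μ] {N D : α → ℝ} {C δ : ℝ} (hNm : Measurable N) (hDm : Measurable D)
    (hN : ∀ z, |N z| ≤ C) (hδ : 0 < δ) (hD : ∀ z, δ ≤ D z) :
    ∫ ρ in Ioi (0:ℝ), ∫ z, N z * exp (-(ρ * D z)) ∂μ = ∫ z, N z / D z ∂μ := by
  have hmajorant : Integrable (fun p : ℝ × α => exp (-δ * p.1) * C)
      ((volume.restrict (Ioi 0)).prod μ) :=
    (exp_neg_integrableOn_Ioi 0 hδ).mul_prod (integrable_const C)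
  have hpos : ∀ᵐ p ∂((volume.restrict (Ioi (0:ℝ))).prod μ), 0 < p.1 :=
    Measure.quasiMeasurePreserving_fst.ae (ae_restrict_mem measurableSet_Ioi)
  have hint : Integrable (Function.uncurry fun ρ z => N z * exp (-(ρ * D z)))
      ((volume.restrict (Ioi 0)).prod μ) := by
    refine hmajorant.mono' (by fun_prop) ?_
    filter_upwards [hpos] with p hp
    rw [Function.uncurry_apply_pair, norm_mul, norm_of_nonneg (exp_pos _).le, mul_comm]
    have hexp : exp (-(p.1 * D p.2)) ≤ exp (-δ * p.1) :=
      exp_le_exp.mpr (by nlinarith [hD p.2])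
    exact mul_le_mul hexp (hN p.2) (abs_nonneg _) (exp_pos _).le
  rw [integral_integral_swap hint]
  refine integral_congr_ae (Filter.Eventually.of_forall fun z => ?_)
  simp only
  rw [integral_const_mul, integral_Ioi_exp_neg_mul (hδ.trans_le (hD z)), mul_one_div]

lemma sq_sub_le_sq_add_sq_sub_mul_cos {q r : ℝ} (h : 0 ≤ q * r) (θ : ℝ) :
    (q - r) ^ 2 ≤ q ^ 2 + r ^ 2 - 2 * q * r * cos θ := by
  nlinarith [mul_nonneg h (sub_nonneg.mpr (cos_le_one θ))]

lemma abs_sub_mul_cos_le (q r θ : ℝ) : |r - q * cos θ| ≤ |r| + |q| := by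
  calc |r - q * cos θ| ≤ |r| + |q * cos θ| := abs_sub _ _
    _ ≤ |r| + |q| := by
      rw [abs_mul]
      exact add_le_add_right (mul_le_of_le_one_right (abs_nonneg q) (abs_cos_le_one θ)) _

lemma mul_besselI0_sub_mul_besselI1 (u v x : ℝ) :
    u * besselI0 x - v * besselI1 x =
      (1 / (2 * π)) * ∫ θ in Ioc 0 (2 * π), (u - v * cos θ) * exp (x * cos θ) := by
  have h1 : IntegrableOn (fun θ => u * exp (x * cos θ)) (Ioc 0 (2 * π)) :=
    (by fun_prop : Continuous _).integrableOn_Ioc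
  have h2 : IntegrableOn (fun θ => v * (exp (x * cos θ) * cos θ)) (Ioc 0 (2 * π)) :=
    (by fun_prop : Continuous _).integrableOn_Ioc
  rw [besselI0, besselI1, intervalIntegral.integral_of_le (by positivity),
    intervalIntegral.integral_of_le (by positivity), mul_left_comm u, mul_left_comm v, ← mul_sub,
    ← integral_const_mul u, ← integral_const_mul v, ← integral_sub h1 h2]
  congr 1
  exact integral_congr_ae (Filter.Eventually.of_forall fun θ => by ring)

noncomputable section KernelIntegrand

def kerDenom (q r s : ℝ) (z : ℝ × ℝ) : ℝ :=
  q ^ 2 + r ^ 2 - 2 * q * r * cos z.1 + q ^ 2 + s ^ 2 - 2 * q * s * cos z.2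

def kerNumer (q r s : ℝ) (z : ℝ × ℝ) : ℝ :=
  (r - q * cos z.1) * (s - q * cos z.2)

local notation "μ𝕋" => Measure.prod (Measure.restrict (volume : Measure ℝ) (Ioc 0 (2 * π)))
  (Measure.restrict (volume : Measure ℝ) (Ioc 0 (2 * π)))

variable {q r s : ℝ}

lemma sq_sub_add_sq_sub_le_kerDenom (hqr : 0 ≤ q * r) (hqs : 0 ≤ q * s) (z : ℝ × ℝ) :
    (q - r) ^ 2 + (q - s) ^ 2 ≤ kerDenom q r s z := by
  have := add_le_add (sq_sub_le_sq_add_sq_sub_mul_cos hqr z.1)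
    (sq_sub_le_sq_add_sq_sub_mul_cos hqs z.2)
  rw [kerDenom]
  linarith

lemma abs_kerNumer_le (z : ℝ × ℝ) : |kerNumer q r s z| ≤ (|r| + |q|) * (|s| + |q|) := by
  rw [kerNumer, abs_mul]
  exact mul_le_mul (abs_sub_mul_cos_le q r z.1) (abs_sub_mul_cos_le q s z.2) (abs_nonneg _)
    (by positivity)

lemma exp_mul_besselI_mul_besselI_eq_integral (ρ : ℝ) :
    exp (-(ρ * (2 * q ^ 2 + r ^ 2 + s ^ 2))) *
        (r * besselI0 (2 * q * r * ρ) - q * besselI1 (2 * q * r * ρ)) *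
        (s * besselI0 (2 * q * s * ρ) - q * besselI1 (2 * q * s * ρ)) =
      (1 / (4 * π ^ 2)) * ∫ z, kerNumer q r s z * exp (-(ρ * kerDenom q r s z)) ∂μ𝕋 := by
  rw [mul_besselI0_sub_mul_besselI1, mul_besselI0_sub_mul_besselI1]
  set c := exp (-(ρ * (2 * q ^ 2 + r ^ 2 + s ^ 2)))
  calc c * (1 / (2 * π) * ∫ θ in Ioc 0 (2 * π), (r - q * cos θ) * exp (2 * q * r * ρ * cos θ)) *
        (1 / (2 * π) * ∫ θ in Ioc 0 (2 * π), (s - q * cos θ) * exp (2 * q * s * ρ * cos θ))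
      = (1 / (4 * π ^ 2)) * (c *
          ((∫ θ in Ioc 0 (2 * π), (r - q * cos θ) * exp (2 * q * r * ρ * cos θ)) *
            ∫ θ in Ioc 0 (2 * π), (s - q * cos θ) * exp (2 * q * s * ρ * cos θ))) := by ring
    _ = _ := by
      rw [← integral_prod_mul, ← integral_const_mul]
      congr 1
      refine integral_congr_ae (Filter.Eventually.of_forall fun z => ?_)
      have hexp : exp (-(ρ * kerDenom q r s z)) =
          c * (exp (2 * q * r * ρ * cos z.1) * exp (2 * q * s * ρ * cos z.2)) := by
        rw [← exp_add, ← exp_add, kerDenom]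
        ring_nf
      simp only [kerNumer, hexp]
      ring

lemma mul_integral_Ioi_eq_integral_kerNumer_div_kerDenom (hq : 0 ≤ q) (hr : 0 ≤ r) (hs : 0 ≤ s)
    (hqr : q ≠ r) :
    q * ∫ ρ in Ioi (0:ℝ), exp (-(ρ * (2 * q ^ 2 + r ^ 2 + s ^ 2))) *
        (r * besselI0 (2 * q * r * ρ) - q * besselI1 (2 * q * r * ρ)) *
        (s * besselI0 (2 * q * s * ρ) - q * besselI1 (2 * q * s * ρ)) * r * s =
      (1 / (4 * π ^ 2)) * ∫ θ₁ in (0:ℝ)..(2 * π), ∫ θ₂ in (0:ℝ)..(2 * π),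
        q * r * s * ((r - q * cos θ₁) * (s - q * cos θ₂)) /
          (q ^ 2 + r ^ 2 - 2 * q * r * cos θ₁ + q ^ 2 + s ^ 2 - 2 * q * s * cos θ₂) := by
  have hδ : 0 < (q - r) ^ 2 + (q - s) ^ 2 := by
    have := sub_ne_zero.mpr hqr
    positivity
  have hD := sq_sub_add_sq_sub_le_kerDenom (mul_nonneg hq hr) (mul_nonneg hq hs)
  have hNm : Measurable (kerNumer q r s) := by unfold kerNumer; fun_prop
  have hDm : Measurable (kerDenom q r s) := by unfold kerDenom; fun_prop
  have hint : Integrable (fun z => kerNumer q r s z / kerDenom q r s z) μ𝕋 := by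
    refine .of_bound (hNm.div hDm).aestronglyMeasurable
      ((|r| + |q|) * (|s| + |q|) / ((q - r) ^ 2 + (q - s) ^ 2))
      (Filter.Eventually.of_forall fun z => ?_)
    rw [norm_div, norm_of_nonneg (hδ.le.trans (hD z)), norm_eq_abs]
    exact div_le_div₀ (by positivity) (abs_kerNumer_le z) hδ (hD z)
  calc _ = q * (r * s / (4 * π ^ 2)) *
        ∫ ρ in Ioi (0:ℝ), ∫ z, kerNumer q r s z * exp (-(ρ * kerDenom q r s z)) ∂μ𝕋 := by
        rw [mul_assoc q, ← integral_const_mul (r * s / (4 * π ^ 2))]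
        congr 1
        refine integral_congr_ae (Filter.Eventually.of_forall fun ρ => ?_)
        beta_reduce
        rw [exp_mul_besselI_mul_besselI_eq_integral]
        ring
    _ = q * (r * s / (4 * π ^ 2)) *
        ∫ θ₁ in Ioc 0 (2 * π), ∫ θ₂ in Ioc 0 (2 * π), (r - q * cos θ₁) * (s - q * cos θ₂) /
          (q ^ 2 + r ^ 2 - 2 * q * r * cos θ₁ + q ^ 2 + s ^ 2 - 2 * q * s * cos θ₂) := by
        rw [integral_Ioi_integral_mul_exp_neg_mul hNm hDm abs_kerNumer_le hδ hD]
        exact congrArg _ (integral_prod _ hint)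
    _ = _ := by
        simp_rw [intervalIntegral.integral_of_le two_pi_pos.le, mul_div_assoc (q * r * s),
          integral_const_mul]
        ring

end KernelIntegrand

/-- Lemma 3.2: for `β = 0` the kernel has the representation
`k₀(r,s) = (1/4π²) ∫₀¹ ∫₀^{2π} ∫₀^{2π} qrs (r − q cos θ₁)(s − q cos θ₂) /
(q² + r² − 2qr cos θ₁ + q² + s² − 2qs cos θ₂) dθ₁ dθ₂ dq`. -/
theorem stmt_11 (r s : ℝ) (hr : 0 < r) (hs : 0 < s) :
    ker 0 r s =
      (1 / (4 * π ^ 2)) * ∫ q in (0:ℝ)..1, ∫ θ₁ in (0:ℝ)..(2 * π), ∫ θ₂ in (0:ℝ)..(2 * π),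
        q * r * s * ((r - q * Real.cos θ₁) * (s - q * Real.cos θ₂)) /
          (q ^ 2 + r ^ 2 - 2 * q * r * Real.cos θ₁ +
            q ^ 2 + s ^ 2 - 2 * q * s * Real.cos θ₂) := by
  have hne : ∀ᵐ q : ℝ, q ≠ r := by simp [ae_iff, measure_singleton]
  rw [ker, ← intervalIntegral.integral_const_mul]
  refine intervalIntegral.integral_congr_ae ?_
  filter_upwards [hne] with q hqr hq
  rw [uIoc_of_le zero_le_one] at hq
  exact mul_integral_Ioi_eq_integral_kerNumer_div_kerDenom hq.1.le hr.le hs.le hqr
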